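/- Let H be an ASC-hypergraph and M ⊆ H. Then: (every M-antichain misses H and |M| = |⋃H|) if and only if M is a construction of H. -/

import Mathlib

namespace HG

variable {α : Type*} [DecidableEq α]

/-- The carrier of a hypergraph: the union of its members. -/
def carrier (H : Finset (Finset α)) : Finset α := H.sup id

/-- A hypergraph (on its carrier) is a finite family of sets not containing `∅`. -/
def IsHypergraph (H : Finset (Finset α)) : Prop := ∅ ∉ H

/-- The restriction `H_Y = {X ∈ H ∣ X ⊆ Y}`. -/
def restrict (H : Finset (Finset α)) (Y : Finset α) : Finset (Finset α) :=
  H.filter (· ⊆ Y)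

/-- `x` and `y` are joined by a path of `H`: a nonempty sequence of distinct members
of `H`, consecutive members intersecting, the first containing `x`, the last `y`. -/
def Joined (H : Finset (Finset α)) (x y : α) : Prop :=
  ∃ (X : Finset α) (l : List (Finset α)),
    (X :: l).Nodup ∧ (∀ Z ∈ X :: l, Z ∈ H) ∧
    (X :: l).Chain' (fun A B => (A ∩ B).Nonempty) ∧
    x ∈ X ∧ y ∈ (X :: l).getLast (List.cons_ne_nil X l)

/-- Path-connectedness of a hypergraph: any two carrier elements are joined. -/
def Conn (H : Finset (Finset α)) : Prop :=
  ∀ x ∈ carrier H, ∀ y ∈ carrier H, Joined H x y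

/-- `P` is a hypergraph partition of `H`: a partition of `H` whose family of
carriers is a partition of the carrier of `H`. -/
def IsHGPartition (H : Finset (Finset α)) (P : Finset (Finset (Finset α))) : Prop :=
  (∀ Q ∈ P, Q ≠ ∅) ∧
  (∀ Q ∈ P, ∀ Q' ∈ P, Q ≠ Q' → Disjoint Q Q') ∧
  P.sup id = H ∧
  (∀ Q ∈ P, ∀ Q' ∈ P, Q ≠ Q' → Disjoint (carrier Q) (carrier Q'))

/-- A hypergraph is atomic when it contains all singletons of carrier elements. -/
def Atomic (H : Finset (Finset α)) : Prop := ∀ x ∈ carrier H, {x} ∈ H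

/-- A hypergraph is saturated when intersecting members have their union in it. -/
def Saturated (H : Finset (Finset α)) : Prop :=
  ∀ X ∈ H, ∀ Y ∈ H, (X ∩ Y).Nonempty → X ∪ Y ∈ H

/-- `Y` is dispensable in `H` when `(H_Y) \ {Y}` is a connected hypergraph on `Y`. -/
def Dispensable (H : Finset (Finset α)) (Y : Finset α) : Prop :=
  IsHypergraph ((restrict H Y).erase Y) ∧
  carrier ((restrict H Y).erase Y) = Y ∧
  Conn ((restrict H Y).erase Y)

/-- `J` enhances `H` when `J = H ∪ {Y}` for some `Y ∉ H` dispensable in `H`. -/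
def Enhances (J H : Finset (Finset α)) : Prop :=
  ∃ Y, Dispensable H Y ∧ Y ∉ H ∧ J = insert Y H

/-- Cognation: the equivalence closure of the enhancement relation. -/
def Cognate (H J : Finset (Finset α)) : Prop :=
  Relation.EqvGen Enhances H J

/-- The finest hypergraph partition: one all of whose parts are connected. -/
def FinestHGPartition (H : Finset (Finset α)) (P : Finset (Finset (Finset α))) : Prop :=
  IsHGPartition H P ∧ ∀ Q ∈ P, Conn Q

/-- Constructions of a hypergraph, defined recursively. -/
inductive IsConstruction : Finset (Finset α) → Finset (Finset α) → Prop
  | empty : IsConstruction ∅ ∅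
  | conn {H K : Finset (Finset α)} {x : α} :
      (carrier H).Nonempty → Conn H → x ∈ carrier H →
      IsConstruction (restrict H ((carrier H).erase x)) K →
      IsConstruction H (insert (carrier H) K)
  | parts {H : Finset (Finset α)} {P : Finset (Finset (Finset α))}
      {K : Finset (Finset α) → Finset (Finset α)} :
      2 ≤ (carrier H).card → ¬ Conn H → 2 ≤ P.card → FinestHGPartition H P →
      (∀ Q ∈ P, IsConstruction Q (K Q)) →
      IsConstruction H (P.sup K)

/-- An `M`-antichain: at least two members of `M`, pairwise incomparable. -/
def IsAntichainIn (M S : Finset (Finset α)) : Prop :=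
  S ⊆ M ∧ 2 ≤ S.card ∧ ∀ X ∈ S, ∀ Y ∈ S, X ≠ Y → ¬ X ⊆ Y ∧ ¬ Y ⊆ X

/-- `S` misses `H` when the union of `S` is not a member of `H`. -/
def Misses (H S : Finset (Finset α)) : Prop := S.sup id ∉ H

/-- `x` is `X`-superficial relative to `M`. -/
def Superficial (M : Finset (Finset α)) (X : Finset α) (x : α) : Prop :=
  x ∈ X ∧ ∀ Y ∈ M, Y ⊂ X → x ∉ Y

/-- ASC-hypergraph: atomic, saturated and connected hypergraph. -/
def ASC (H : Finset (Finset α)) : Prop :=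
  IsHypergraph H ∧ Atomic H ∧ Saturated H ∧ Conn H

end HG

/-!
Nestedness makes `M` laminar: two intersecting members have their union in `H` by saturation, so
they cannot form a missing antichain. More generally, if a subfamily of `M` has its union in `H`,
that union is one of its members, since otherwise the maximal members would be such an antichain.
Applied to the members of `M` strictly inside `X ∈ M`, this gives every `X` a superficial element,
and laminarity makes superficial elements of distinct members distinct, so `|M| ≤ |⋃H|`; with
equality `M` covers `⋃H`. For connected `H` we have `⋃H ∈ H`, hence `⋃H ∈ M`; removing it together
with one of its superficial elements `x` leaves a nested family of full size in `H_{⋃H−{x}}`, and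
induction on `|⋃H|` applies. A disconnected `H` splits into the restrictions to its maximal members,
and the size count forces `M` to have full size on each of them. The converse is checked along the
recursive definition of constructions.
-/

namespace HG

lemma IsHypergraph.nonempty_of_mem {α : Type*} {H : Finset (Finset α)} {X : Finset α}
    (hE : IsHypergraph H) (hX : X ∈ H) : X.Nonempty :=
  Finset.nonempty_iff_ne_empty.2 fun h => hE (h ▸ hX)

lemma IsHypergraph.mono {α : Type*} {H H' : Finset (Finset α)} (hE : IsHypergraph H)
    (h : H' ⊆ H) : IsHypergraph H' :=
  fun h' => hE (h h')

variable {α : Type*} [DecidableEq α] {H H' M M' K F : Finset (Finset α)}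
  {P : Finset (Finset (Finset α))} {Q : Finset (Finset α)} {V W X Y : Finset α} {x y : α}

def Nested (H M : Finset (Finset α)) : Prop := ∀ S, IsAntichainIn M S → Misses H S

lemma mem_carrier : x ∈ carrier H ↔ ∃ X ∈ H, x ∈ X := by
  simp [carrier, Finset.mem_sup]

lemma subset_carrier (hX : X ∈ H) : X ⊆ carrier H :=
  Finset.le_sup (f := id) hX

lemma carrier_mono (h : H' ⊆ H) : carrier H' ⊆ carrier H :=
  Finset.sup_mono h

lemma carrier_subset_iff : carrier H ⊆ W ↔ ∀ X ∈ H, X ⊆ W :=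
  Finset.sup_le_iff

lemma mem_restrict : X ∈ restrict H W ↔ X ∈ H ∧ X ⊆ W :=
  Finset.mem_filter

lemma restrict_subset : restrict H W ⊆ H :=
  Finset.filter_subset _ _

lemma carrier_restrict_subset : carrier (restrict H W) ⊆ W :=
  carrier_subset_iff.2 fun _ hX => (mem_restrict.1 hX).2

lemma carrier_restrict_of_mem (hW : W ∈ H) : carrier (restrict H W) = W :=
  carrier_restrict_subset.antisymm (subset_carrier (mem_restrict.2 ⟨hW, subset_rfl⟩))

lemma carrier_restrict (hAt : Atomic H) (hW : W ⊆ carrier H) : carrier (restrict H W) = W := by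
  refine carrier_restrict_subset.antisymm fun y hy => ?_
  exact subset_carrier (mem_restrict.2 ⟨hAt y (hW hy), Finset.singleton_subset_iff.2 hy⟩)
    (Finset.mem_singleton_self y)

lemma IsHypergraph.eq_empty_of_carrier_eq_empty (hE : IsHypergraph H) (h : carrier H = ∅) :
    H = ∅ :=
  Finset.eq_empty_of_forall_notMem fun _ hX =>
    (hE.nonempty_of_mem hX).ne_empty (Finset.subset_empty.1 (h ▸ subset_carrier hX))

lemma Atomic.restrict (hAt : Atomic H) (hW : W ⊆ carrier H) : Atomic (restrict H W) := by
  intro y hy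
  rw [carrier_restrict hAt hW] at hy
  exact mem_restrict.2 ⟨hAt y (hW hy), Finset.singleton_subset_iff.2 hy⟩

lemma Saturated.restrict (hSat : Saturated H) : Saturated (restrict H W) := by
  intro X hX Y hY hXY
  rw [mem_restrict] at hX hY ⊢
  exact ⟨hSat X hX.1 Y hY.1 hXY, Finset.union_subset hX.2 hY.2⟩

lemma conn_of_carrier_mem (h : carrier H ∈ H) : Conn H :=
  fun _ hx _ hy => ⟨carrier H, [], by simp, by simpa using h, List.isChain_singleton _, hx, hy⟩

lemma conn_of_card_carrier_le_one (hAt : Atomic H) (h : (carrier H).card ≤ 1) : Conn H := by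
  intro x hx
  have hV : carrier H = {x} :=
    Finset.eq_singleton_iff_unique_mem.2 ⟨hx, fun y hy => Finset.card_le_one.1 h y hy x hx⟩
  exact conn_of_carrier_mem (hV ▸ hAt x hx) x hx

lemma Saturated.exists_mem_superset_of_chain (hSat : Saturated H) (X : Finset α)
    (l : List (Finset α)) (hl : ∀ Z ∈ X :: l, Z ∈ H)
    (hch : (X :: l).IsChain fun A B => (A ∩ B).Nonempty) :
    ∃ U ∈ H, X ⊆ U ∧ (X :: l).getLast (List.cons_ne_nil X l) ⊆ U := by
  induction l generalizing X with
  | nil => exact ⟨X, hl X List.mem_cons_self, subset_rfl, subset_rfl⟩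
  | cons Y t ih =>
    obtain ⟨hXY, hch⟩ := List.isChain_cons_cons.1 hch
    obtain ⟨U, hU, hYU, hlast⟩ := ih Y (fun Z hZ => hl Z (List.mem_cons_of_mem X hZ)) hch
    have hXU : (X ∩ U).Nonempty := hXY.mono (Finset.inter_subset_inter_left hYU)
    exact ⟨X ∪ U, hSat X (hl X List.mem_cons_self) U hU hXU, Finset.subset_union_left,
      hlast.trans Finset.subset_union_right⟩

lemma Saturated.exists_mem_of_joined (hSat : Saturated H) (h : Joined H x y) :
    ∃ U ∈ H, x ∈ U ∧ y ∈ U := by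
  obtain ⟨X, l, -, hl, hch, hx, hy⟩ := h
  obtain ⟨U, hU, hXU, hlast⟩ := hSat.exists_mem_superset_of_chain X l hl hch
  exact ⟨U, hU, hXU hx, hlast hy⟩

def maximalMembers (F : Finset (Finset α)) : Finset (Finset α) :=
  F.filter fun W => ∀ Z ∈ F, ¬ W ⊂ Z

lemma mem_maximalMembers : W ∈ maximalMembers F ↔ W ∈ F ∧ ∀ Z ∈ F, ¬ W ⊂ Z :=
  Finset.mem_filter

lemma maximalMembers_subset : maximalMembers F ⊆ F :=
  Finset.filter_subset _ _

lemma exists_mem_maximalMembers_superset (hX : X ∈ F) : ∃ W ∈ maximalMembers F, X ⊆ W := by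
  obtain ⟨W, hXW, hW⟩ := F.exists_le_maximal hX
  exact ⟨W, mem_maximalMembers.2 ⟨hW.prop, fun _ hZ => hW.not_gt hZ⟩, hXW⟩

lemma carrier_maximalMembers : carrier (maximalMembers F) = carrier F := by
  refine (carrier_mono maximalMembers_subset).antisymm (carrier_subset_iff.2 fun X hX => ?_)
  obtain ⟨W, hW, hXW⟩ := exists_mem_maximalMembers_superset hX
  exact hXW.trans (subset_carrier hW)

lemma carrier_mem_of_card_maximalMembers_le_one (hF : F.Nonempty)
    (h : (maximalMembers F).card ≤ 1) : carrier F ∈ F := by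
  obtain ⟨X, hX⟩ := hF
  obtain ⟨W, hW, -⟩ := exists_mem_maximalMembers_superset hX
  have hsingle : maximalMembers F = {W} :=
    Finset.eq_singleton_iff_unique_mem.2 ⟨hW, fun Z hZ => Finset.card_le_one.1 h Z hZ W hW⟩
  rw [← carrier_maximalMembers, hsingle]
  simpa [carrier] using maximalMembers_subset hW

lemma isAntichainIn_maximalMembers (hFM : F ⊆ M) (h2 : 2 ≤ (maximalMembers F).card) :
    IsAntichainIn M (maximalMembers F) := by
  refine ⟨maximalMembers_subset.trans hFM, h2, fun X hX Y hY hXY => ⟨fun hs => ?_, fun hs => ?_⟩⟩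
  · exact (mem_maximalMembers.1 hX).2 Y (maximalMembers_subset hY) (hs.ssubset_of_ne hXY)
  · exact (mem_maximalMembers.1 hY).2 X (maximalMembers_subset hX) (hs.ssubset_of_ne hXY.symm)

lemma Saturated.subset_of_mem_maximalMembers (hSat : Saturated H) (hW : W ∈ maximalMembers H)
    (hX : X ∈ H) (hWX : (W ∩ X).Nonempty) : X ⊆ W := by
  obtain ⟨hWH, hmax⟩ := mem_maximalMembers.1 hW
  by_contra hXW
  exact hmax _ (hSat W hWH X hX hWX)
    (Finset.ssubset_iff_subset_ne.2 ⟨Finset.subset_union_left,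
      fun h => hXW (h ▸ Finset.subset_union_right)⟩)

lemma Saturated.disjoint_of_mem_maximalMembers (hSat : Saturated H) (hW : W ∈ maximalMembers H)
    (hW' : V ∈ maximalMembers H) (hne : W ≠ V) : Disjoint W V := by
  rw [Finset.disjoint_iff_inter_eq_empty, ← Finset.not_nonempty_iff_eq_empty]
  intro hWV
  exact hne ((hSat.subset_of_mem_maximalMembers hW' (maximalMembers_subset hW)
    (Finset.inter_comm W V ▸ hWV)).antisymm
    (hSat.subset_of_mem_maximalMembers hW (maximalMembers_subset hW') hWV))

lemma Saturated.carrier_mem_of_conn (hSat : Saturated H) (hConn : Conn H)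
    (hne : (carrier H).Nonempty) : carrier H ∈ H := by
  obtain ⟨x, hx⟩ := hne
  obtain ⟨X, hX, hxX⟩ := mem_carrier.1 hx
  obtain ⟨W, hW, hXW⟩ := exists_mem_maximalMembers_superset hX
  have hWH := maximalMembers_subset hW
  suffices carrier H ⊆ W by rwa [this.antisymm (subset_carrier hWH)]
  intro z hz
  obtain ⟨U, hU, hxU, hzU⟩ := hSat.exists_mem_of_joined (hConn x hx z hz)
  exact hSat.subset_of_mem_maximalMembers hW hU ⟨x, Finset.mem_inter.2 ⟨hXW hxX, hxU⟩⟩ hzU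

lemma Nested.mono (hN : Nested H M) (hH : H' ⊆ H) (hM : M' ⊆ M) : Nested H' M' :=
  fun S hS hmem => hN S ⟨hS.1.trans hM, hS.2⟩ (hH hmem)

lemma Nested.carrier_mem (hN : Nested H M) (hFM : F ⊆ M) (hF : F.Nonempty)
    (h : carrier F ∈ H) : carrier F ∈ F := by
  refine carrier_mem_of_card_maximalMembers_le_one hF (not_lt.1 fun h2 => ?_)
  exact hN _ (isAntichainIn_maximalMembers hFM h2) (by rwa [← carrier_maximalMembers] at h)

lemma Nested.subset_or_subset (hSat : Saturated H) (hM : M ⊆ H) (hN : Nested H M) (hX : X ∈ M) (hY : Y ∈ M) (hXY : (X ∩ Y).Nonempty) :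
    X ⊆ Y ∨ Y ⊆ X := by
  have hcarrier : carrier {X, Y} = X ∪ Y := by simp [carrier]
  have hpair : X ∪ Y ∈ ({X, Y} : Finset (Finset α)) := hcarrier ▸ hN.carrier_mem
    (Finset.insert_subset hX (Finset.singleton_subset_iff.2 hY)) (Finset.insert_nonempty _ _)
    (hcarrier ▸ hSat X (hM hX) Y (hM hY) hXY)
  rcases Finset.mem_insert.1 hpair with h | h
  · exact Or.inr (Finset.union_eq_left.1 h)
  · exact Or.inl (Finset.union_eq_right.1 (Finset.mem_singleton.1 h))

lemma Nested.eq_of_superficial (hSat : Saturated H) (hM : M ⊆ H) (hN : Nested H M) (hX : X ∈ M) (hY : Y ∈ M) (hxX : Superficial M X x)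
    (hxY : Superficial M Y x) : X = Y := by
  by_contra hXY
  rcases hN.subset_or_subset hSat hM hX hY ⟨x, Finset.mem_inter.2 ⟨hxX.1, hxY.1⟩⟩ with h | h
  · exact hxY.2 X hX (h.ssubset_of_ne hXY) hxX.1
  · exact hxX.2 Y hY (h.ssubset_of_ne (Ne.symm hXY)) hxY.1

lemma Nested.exists_superficial (hM : M ⊆ H) (hN : Nested H M) (hE : IsHypergraph H) (hX : X ∈ M) : ∃ x, Superficial M X x := by
  by_contra! hnot
  set F := M.filter (· ⊂ X)
  have hcover : ∀ x ∈ X, ∃ Y ∈ F, x ∈ Y := fun x hx => by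
    obtain ⟨Y, hY, hYX, hxY⟩ : ∃ Y ∈ M, Y ⊂ X ∧ x ∈ Y := by
      simpa [Superficial, hx] using hnot x
    exact ⟨Y, Finset.mem_filter.2 ⟨hY, hYX⟩, hxY⟩
  have hcarrier : carrier F = X := by
    refine (carrier_subset_iff.2 fun Y hY => (Finset.mem_filter.1 hY).2.subset).antisymm ?_
    intro x hx
    obtain ⟨Y, hY, hxY⟩ := hcover x hx
    exact subset_carrier hY hxY
  obtain ⟨x, hx⟩ := hE.nonempty_of_mem (hM hX)
  obtain ⟨Y, hY, -⟩ := hcover x hx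
  have hXF := hN.carrier_mem (Finset.filter_subset _ _) ⟨Y, hY⟩ (by rw [hcarrier]; exact hM hX)
  rw [hcarrier] at hXF
  exact (Finset.mem_filter.1 hXF).2.ne rfl

lemma Nested.card_le_card (hSat : Saturated H) (hM : M ⊆ H) (hN : Nested H M) (hE : IsHypergraph H) {T : Finset α} (hT : ∀ X ∈ M, X ⊆ T) :
    M.card ≤ T.card := by
  refine Finset.card_le_card_of_forall_subsingleton (Superficial M) (fun X hX => ?_)
    (fun x _ X hX Y hY => hN.eq_of_superficial hSat hM hX.1 hY.1 hX.2 hY.2)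
  obtain ⟨x, hx⟩ := hN.exists_superficial hM hE hX
  exact ⟨x, hT X hX hx.1, hx⟩

lemma Nested.card_le (hSat : Saturated H) (hM : M ⊆ H) (hN : Nested H M) (hE : IsHypergraph H) : M.card ≤ (carrier H).card :=
  hN.card_le_card hSat hM hE fun _ hX => subset_carrier (hM hX)

lemma Nested.carrier_eq (hSat : Saturated H) (hM : M ⊆ H) (hN : Nested H M) (hE : IsHypergraph H) (hcard : M.card = (carrier H).card) :
    carrier M = carrier H := by
  refine (carrier_mono hM).antisymm fun v hv => by_contra fun hvM => ?_
  have hT : ∀ X ∈ M, X ⊆ (carrier H).erase v := fun X hX y hy =>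
    Finset.mem_erase.2 ⟨fun h => hvM (h ▸ subset_carrier hX hy), subset_carrier (hM hX) hy⟩
  have := hN.card_le_card hSat hM hE hT
  rw [Finset.card_erase_of_mem hv] at this
  have := Finset.card_pos.2 ⟨v, hv⟩
  omega

lemma Nested.carrier_mem_of_card_eq (hSat : Saturated H) (hM : M ⊆ H) (hN : Nested H M) (hE : IsHypergraph H) (hcard : M.card = (carrier H).card)
    (hV : carrier H ∈ H) (hne : (carrier H).Nonempty) : carrier H ∈ M := by
  have hMne : M.Nonempty := Finset.card_pos.1 (hcard ▸ Finset.card_pos.2 hne)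
  have hcarrier := hN.carrier_eq hSat hM hE hcard
  exact hcarrier ▸ hN.carrier_mem subset_rfl hMne (hcarrier ▸ hV)

lemma Nested.of_restrict (hK : K ⊆ restrict H W) (hN : Nested (restrict H W) K) : Nested H K :=
  fun S hS hmem => hN S hS <| mem_restrict.2
    ⟨hmem, carrier_subset_iff.2 fun _ hX => (mem_restrict.1 (hK (hS.1 hX))).2⟩

lemma Nested.insert (hN : Nested H K) (hKV : ∀ X ∈ K, X ⊆ V) : Nested H (insert V K) := by
  intro S hS
  refine hN S ⟨fun Y hY => ?_, hS.2⟩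
  have hne : Y ≠ V := by
    rintro rfl
    obtain ⟨Z, hZ, hZY⟩ := Finset.exists_mem_ne hS.2.1 Y
    have hZK := (Finset.mem_insert.1 (hS.1 hZ)).resolve_left hZY
    exact (hS.2.2 Z hZ Y hY hZY).1 (hKV Z hZK)
  exact (Finset.mem_insert.1 (hS.1 hY)).resolve_left hne

lemma erase_subset_restrict_erase (hM : M ⊆ H) (hMV : ∀ Y ∈ M, Y ⊆ V)
    (hx : Superficial M V x) : M.erase V ⊆ restrict H (V.erase x) := by
  intro Y hY
  obtain ⟨hYV, hYM⟩ := Finset.mem_erase.1 hY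
  have hxY : x ∉ Y := hx.2 Y hYM ((hMV Y hYM).ssubset_of_ne hYV)
  exact mem_restrict.2 ⟨hM hYM, fun y hy =>
    Finset.mem_erase.2 ⟨fun h => hxY (h ▸ hy), hMV Y hYM hy⟩⟩

lemma IsHGPartition.subset (hP : IsHGPartition H P) (hQ : Q ∈ P) : Q ⊆ H :=
  hP.2.2.1 ▸ Finset.le_sup (f := id) hQ

lemma IsHGPartition.eq_restrict (hE : IsHypergraph H) (hP : IsHGPartition H P) (hQ : Q ∈ P) :
    Q = restrict H (carrier Q) := by
  refine Finset.Subset.antisymm (fun Z hZ => mem_restrict.2 ⟨hP.subset hQ hZ, subset_carrier hZ⟩)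
    fun Z hZ => ?_
  obtain ⟨hZH, hZQ⟩ := mem_restrict.1 hZ
  obtain ⟨Q', hQ', hZQ'⟩ := Finset.mem_sup.1 (hP.2.2.1.symm ▸ hZH)
  by_contra hZ'
  obtain ⟨z, hz⟩ := hE.nonempty_of_mem hZH
  exact Finset.disjoint_left.1 (hP.2.2.2 Q' hQ' Q hQ fun h => hZ' (h ▸ hZQ'))
    (subset_carrier hZQ' hz) (hZQ hz)

lemma IsHGPartition.atomic (hE : IsHypergraph H) (hAt : Atomic H) (hP : IsHGPartition H P)
    (hQ : Q ∈ P) : Atomic Q :=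
  hP.eq_restrict hE hQ ▸ hAt.restrict (carrier_mono (hP.subset hQ))

lemma IsHGPartition.saturated (hE : IsHypergraph H) (hSat : Saturated H)
    (hP : IsHGPartition H P) (hQ : Q ∈ P) : Saturated Q :=
  hP.eq_restrict hE hQ ▸ hSat.restrict

lemma IsHGPartition.card_carrier_lt (hE : IsHypergraph H) (hP : IsHGPartition H P)
    (h2 : 2 ≤ P.card) (hQ : Q ∈ P) : (carrier Q).card < (carrier H).card := by
  refine Finset.card_lt_card ((Finset.ssubset_iff_of_subset (carrier_mono (hP.subset hQ))).2 ?_)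
  obtain ⟨Q', hQ', hne⟩ := Finset.exists_mem_ne h2 Q
  obtain ⟨Z, hZ⟩ := Finset.nonempty_iff_ne_empty.2 (hP.1 Q' hQ')
  obtain ⟨z, hz⟩ := hE.nonempty_of_mem (hP.subset hQ' hZ)
  exact ⟨z, subset_carrier (hP.subset hQ' hZ) hz,
    Finset.disjoint_left.1 (hP.2.2.2 Q' hQ' Q hQ hne) (subset_carrier hZ hz)⟩

lemma IsHGPartition.card_carrier (hP : IsHGPartition H P) :
    (carrier H).card = ∑ Q ∈ P, (carrier Q).card := by
  have hcarrier : carrier H = P.biUnion carrier := by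
    ext x
    simp only [Finset.mem_biUnion, mem_carrier, ← hP.2.2.1, Finset.mem_sup, id]
    aesop
  rw [hcarrier, Finset.card_biUnion hP.2.2.2]

lemma IsHGPartition.card_sup (hP : IsHGPartition H P) {K : Finset (Finset α) → Finset (Finset α)}
    (hK : ∀ Q ∈ P, K Q ⊆ Q) : (P.sup K).card = ∑ Q ∈ P, (K Q).card := by
  rw [Finset.sup_eq_biUnion, Finset.card_biUnion fun Q hQ Q' hQ' hne =>
    (hP.2.1 Q hQ Q' hQ' hne).mono (hK Q hQ) (hK Q' hQ')]

lemma IsHGPartition.sup_inter (hP : IsHGPartition H P) (hM : M ⊆ H) :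
    P.sup (fun Q => M ∩ Q) = M := by
  refine Finset.Subset.antisymm (Finset.sup_le fun _ _ => Finset.inter_subset_left)
    fun Y hY => ?_
  obtain ⟨Q, hQ, hYQ⟩ := Finset.mem_sup.1 (hP.2.2.1.symm ▸ hM hY)
  exact Finset.mem_sup.2 ⟨Q, hQ, Finset.mem_inter.2 ⟨hY, hYQ⟩⟩

lemma IsHGPartition.nested_sup (hE : IsHypergraph H) (hP : IsHGPartition H P)
    {K : Finset (Finset α) → Finset (Finset α)} (hK : ∀ Q ∈ P, K Q ⊆ Q)
    (hN : ∀ Q ∈ P, Nested Q (K Q)) : Nested H (P.sup K) := by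
  intro S hS hSH
  obtain ⟨Q, hQ, hSQ⟩ := Finset.mem_sup.1 (hP.2.2.1.symm ▸ hSH)
  refine hN Q hQ S ⟨fun Y hY => ?_, hS.2⟩ hSQ
  obtain ⟨Q', hQ', hYQ'⟩ := Finset.mem_sup.1 (hS.1 hY)
  have hYQ : Y ∈ Q := hP.eq_restrict hE hQ ▸ mem_restrict.2
    ⟨hP.subset hQ' (hK Q' hQ' hYQ'), (subset_carrier hY).trans (subset_carrier hSQ)⟩
  by_contra hQQ'
  exact Finset.disjoint_left.1 (hP.2.1 Q' hQ' Q hQ fun h => hQQ' (h ▸ hYQ')) (hK Q' hQ' hYQ') hYQ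

lemma IsHGPartition.card_inter_eq (hE : IsHypergraph H) (hSat : Saturated H)
    (hP : IsHGPartition H P) (hM : M ⊆ H) (hN : Nested H M) (hcard : M.card = (carrier H).card)
    (hQ : Q ∈ P) : (M ∩ Q).card = (carrier Q).card := by
  have hle : ∀ Q ∈ P, (M ∩ Q).card ≤ (carrier Q).card := fun Q hQ =>
    (hN.mono (hP.subset hQ) Finset.inter_subset_left).card_le (hP.saturated hE hSat hQ)
      Finset.inter_subset_right (hE.mono (hP.subset hQ))
  have hsum : ∑ Q ∈ P, (M ∩ Q).card = ∑ Q ∈ P, (carrier Q).card := by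
    rw [← hP.card_sup fun _ _ => Finset.inter_subset_right, hP.sup_inter hM, hcard,
      hP.card_carrier]
  exact (Finset.sum_eq_sum_iff_of_le hle).1 hsum Q hQ

def components (H : Finset (Finset α)) : Finset (Finset (Finset α)) :=
  (maximalMembers H).image (restrict H)

lemma finestHGPartition_components (hE : IsHypergraph H) (hSat : Saturated H) :
    FinestHGPartition H (components H) := by
  have hcarrier : ∀ W ∈ maximalMembers H, carrier (restrict H W) = W :=
    fun W hW => carrier_restrict_of_mem (maximalMembers_subset hW)
  refine ⟨⟨?_, ?_, ?_, ?_⟩, ?_⟩ <;> simp only [components, Finset.forall_mem_image]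
  · exact fun W hW => Finset.ne_empty_of_mem (mem_restrict.2 ⟨maximalMembers_subset hW, subset_rfl⟩)
  · intro W hW V hV hne
    refine Finset.disjoint_left.2 fun Z hZ hZ' => ?_
    obtain ⟨z, hz⟩ := hE.nonempty_of_mem (mem_restrict.1 hZ).1
    exact Finset.disjoint_left.1 (hSat.disjoint_of_mem_maximalMembers hW hV
      fun h => hne (h ▸ rfl)) ((mem_restrict.1 hZ).2 hz) ((mem_restrict.1 hZ').2 hz)
  · refine Finset.Subset.antisymm (Finset.sup_le fun _ h => ?_) fun Z hZ => ?_
    · obtain ⟨W, -, rfl⟩ := Finset.mem_image.1 h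
      exact restrict_subset
    · obtain ⟨W, hW, hZW⟩ := exists_mem_maximalMembers_superset hZ
      exact Finset.mem_sup.2 ⟨_, Finset.mem_image_of_mem _ hW, mem_restrict.2 ⟨hZ, hZW⟩⟩
  · intro W hW V hV hne
    rw [hcarrier W hW, hcarrier V hV]
    exact hSat.disjoint_of_mem_maximalMembers hW hV fun h => hne (h ▸ rfl)
  · exact fun W hW => conn_of_carrier_mem ((hcarrier W hW).symm ▸
      mem_restrict.2 ⟨maximalMembers_subset hW, subset_rfl⟩)

lemma two_le_card_components (hConn : ¬ Conn H) : 2 ≤ (components H).card := by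
  rw [components, Finset.card_image_of_injOn fun W hW V hV h => by
    rw [← carrier_restrict_of_mem (maximalMembers_subset hW),
      ← carrier_restrict_of_mem (maximalMembers_subset hV)]
    exact congrArg carrier h]
  refine not_lt.1 fun h1 => hConn (conn_of_carrier_mem ?_)
  rcases H.eq_empty_or_nonempty with rfl | hH
  · exact absurd (fun x hx => by simp [carrier] at hx) hConn
  · exact carrier_mem_of_card_maximalMembers_le_one hH (Nat.lt_succ_iff.1 h1)

theorem IsConstruction.nested (hC : IsConstruction H M) (hE : IsHypergraph H) (hAt : Atomic H)
    (hSat : Saturated H) : M ⊆ H ∧ Nested H M ∧ M.card = (carrier H).card := by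
  induction hC with
  | empty => exact ⟨subset_rfl, fun S _ => Finset.notMem_empty _, rfl⟩
  | @conn H K x hne hConn hx _ ih =>
    have hW : (carrier H).erase x ⊆ carrier H := Finset.erase_subset x _
    obtain ⟨hK, hN, hcard⟩ := ih (hE.mono restrict_subset) (hAt.restrict hW) hSat.restrict
    have hKW : ∀ X ∈ K, X ⊆ (carrier H).erase x := fun X hX => (mem_restrict.1 (hK hX)).2
    have hVK : carrier H ∉ K := fun h => Finset.notMem_erase x _ (hKW _ h hx)
    refine ⟨Finset.insert_subset (hSat.carrier_mem_of_conn hConn hne) (hK.trans restrict_subset),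
      (hN.of_restrict hK).insert fun X hX => (hKW X hX).trans hW, ?_⟩
    rw [Finset.card_insert_of_notMem hVK, hcard, carrier_restrict hAt hW,
      Finset.card_erase_add_one hx]
  | @parts H P K _ _ _ hP _ ih =>
    have hKQ : ∀ Q ∈ P, K Q ⊆ Q ∧ Nested Q (K Q) ∧ (K Q).card = (carrier Q).card :=
      fun Q hQ => ih Q hQ (hE.mono (hP.1.subset hQ)) (hP.1.atomic hE hAt hQ)
        (hP.1.saturated hE hSat hQ)
    refine ⟨Finset.sup_le fun Q hQ => (hKQ Q hQ).1.trans (hP.1.subset hQ),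
      hP.1.nested_sup hE (fun Q hQ => (hKQ Q hQ).1) fun Q hQ => (hKQ Q hQ).2.1, ?_⟩
    rw [hP.1.card_sup fun Q hQ => (hKQ Q hQ).1, hP.1.card_carrier]
    exact Finset.sum_congr rfl fun Q hQ => (hKQ Q hQ).2.2

theorem isConstruction_of_nested (hE : IsHypergraph H) (hAt : Atomic H) (hSat : Saturated H)
    (hM : M ⊆ H) (hN : Nested H M) (hcard : M.card = (carrier H).card) : IsConstruction H M := by
  induction hn : (carrier H).card using Nat.strong_induction_on generalizing H M with
  | _ n ih =>
  subst hn
  rcases (carrier H).eq_empty_or_nonempty with hV | hV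
  · obtain rfl := hE.eq_empty_of_carrier_eq_empty hV
    rw [Finset.subset_empty.1 hM]
    exact .empty
  by_cases hConn : Conn H
  · have hVM := hN.carrier_mem_of_card_eq hSat hM hE hcard (hSat.carrier_mem_of_conn hConn hV) hV
    obtain ⟨x, hx⟩ := hN.exists_superficial hM hE hVM
    have hW : (carrier H).erase x ⊆ carrier H := Finset.erase_subset x _
    have hcardW : ((carrier H).erase x).card < (carrier H).card :=
      Finset.card_erase_lt_of_mem hx.1
    have hK := ih _ (by rwa [carrier_restrict hAt hW]) (hE.mono restrict_subset)
      (hAt.restrict hW) hSat.restrict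
      (erase_subset_restrict_erase hM (fun Y hY => subset_carrier (hM hY)) hx)
      (hN.mono restrict_subset (Finset.erase_subset _ _))
      (by rw [carrier_restrict hAt hW, Finset.card_erase_of_mem hVM, Finset.card_erase_of_mem hx.1,
        hcard]) rfl
    simpa [Finset.insert_erase hVM] using IsConstruction.conn hV hConn hx.1 hK
  · have hP := finestHGPartition_components hE hSat
    have hP2 := two_le_card_components hConn
    rw [← hP.1.sup_inter hM]
    refine .parts (not_lt.1 fun h => hConn (conn_of_card_carrier_le_one hAt (by omega))) hConn hP2
      hP fun Q hQ => ih _ (hP.1.card_carrier_lt hE hP2 hQ) (hE.mono (hP.1.subset hQ))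
        (hP.1.atomic hE hAt hQ) (hP.1.saturated hE hSat hQ) Finset.inter_subset_right
        (hN.mono (hP.1.subset hQ) Finset.inter_subset_left)
        (hP.1.card_inter_eq hE hSat hM hN hcard hQ) rfl

end HG

open HG

theorem construction_characterization
    {α : Type*} [DecidableEq α]
    (H M : Finset (Finset α)) (hH : ASC H) (hM : M ⊆ H) :
    ((∀ S, IsAntichainIn M S → Misses H S) ∧ M.card = (carrier H).card) ↔
      IsConstruction H M := by
  obtain ⟨hE, hAt, hSat, -⟩ := hH
  exact ⟨fun ⟨hN, hcard⟩ => isConstruction_of_nested hE hAt hSat hM hN hcard,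
    fun hC => (hC.nested hE hAt hSat).2⟩
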